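/- Let f, g, h ∈ K[X₁,…,X_n] with f = g·h. Then every edge of the Newton polytope of f is parallel to an edge of the Newton polytope of g or to an edge of the Newton polytope of h. -/

import Mathlib

variable {K : Type*} {n : ℕ}

/-- The Newton polytope of a multivariate polynomial: the convex hull in `ℝⁿ` of the
exponent vectors of its nonzero monomials. -/
noncomputable def newtonPolytope [CommSemiring K] (f : MvPolynomial (Fin n) K) :
    Set (Fin n → ℝ) :=
  convexHull ℝ ((fun (m : Fin n →₀ ℕ) (i : Fin n) => (m i : ℝ)) '' ↑f.support)

/-- `[x, y]` is an edge of the polytope `P`: a one-dimensional extreme (face) of `P`. -/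
def IsEdgeOf (P : Set (Fin n → ℝ)) (x y : Fin n → ℝ) : Prop :=
  x ≠ y ∧ IsExtreme ℝ P (segment ℝ x y)

/-!
An edge `[x, y]` of a polytope is exposed: some linear functional `ℓ` attains its maximum on the
polytope exactly along `[x, y]`. The Newton polytope of the `ℓ`-initial form of a polynomial is
the `ℓ`-face of its Newton polytope, and over a domain initial forms are multiplicative, so
`[x, y]` is the Newton polytope of `in g * in h`. A factor of a weighted homogeneous polynomial is
weighted homogeneous; hence every functional that is constant on `[x, y]` is constant on the
Newton polytopes of `in g` and `in h`, which are therefore segments parallel to `y - x`, and they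
cannot both be points since `x ≠ y`. These segments are faces of the Newton polytopes of `g` and
`h`, i.e. edges.
-/

open Set AffineMap

namespace MvPolynomial

section InitialForm

open Finsupp

variable {σ R M : Type*} [CommSemiring R] [AddCommMonoid M] [LinearOrder M] (w : σ → M)
  {p q : MvPolynomial σ R} {d : σ →₀ ℕ}

theorem le_weightedTotalDegree' (hd : d ∈ p.support) :
    (weight w d : WithBot M) ≤ weightedTotalDegree' w p :=
  Finset.le_sup (f := fun d => (weight w d : WithBot M)) hd

theorem exists_mem_support_weightedTotalDegree'_eq (hp : p ≠ 0) :
    ∃ a ∈ p.support, weightedTotalDegree' w p = weight w a :=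
  Finset.exists_mem_eq_sup _ (support_nonempty.2 hp) _

theorem coe_weight_eq_weightedTotalDegree'_iff (hd : d ∈ p.support) :
    (weight w d : WithBot M) = weightedTotalDegree' w p ↔
      ∀ d' ∈ p.support, weight w d' ≤ weight w d := by
  refine ⟨fun h d' hd' => WithBot.coe_le_coe.1 (h ▸ le_weightedTotalDegree' w hd'), fun h => ?_⟩
  exact le_antisymm (le_weightedTotalDegree' w hd)
    (Finset.sup_le fun d' hd' => WithBot.coe_le_coe.2 (h d' hd'))

/-- The junk degree `0` for `p = 0` is harmless: every weighted homogeneous component of `0` is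
`0`. -/
noncomputable def initialForm (p : MvPolynomial σ R) : MvPolynomial σ R :=
  weightedHomogeneousComponent w ((weightedTotalDegree' w p).unbotD 0) p

theorem coeff_initialForm :
    coeff d (initialForm w p) =
      if (weight w d : WithBot M) = weightedTotalDegree' w p then coeff d p else 0 := by
  rw [initialForm, coeff_weightedHomogeneousComponent]
  by_cases hd : coeff d p = 0
  · simp [hd]
  have hdeg : weightedTotalDegree' w p ≠ ⊥ :=
    ne_bot_of_le_ne_bot WithBot.coe_ne_bot (le_weightedTotalDegree' w (mem_support_iff.2 hd))
  simp only [WithBot.unbotD_eq_iff, hdeg, false_and, or_false, eq_comm]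

theorem mem_support_initialForm :
    d ∈ (initialForm w p).support ↔
      d ∈ p.support ∧ (weight w d : WithBot M) = weightedTotalDegree' w p := by
  rw [mem_support_iff, mem_support_iff, coeff_initialForm]
  split_ifs with h <;> simp [h]

theorem initialForm_ne_zero (hp : p ≠ 0) : initialForm w p ≠ 0 := by
  obtain ⟨d, hd, hmax⟩ := exists_mem_support_weightedTotalDegree'_eq w hp
  exact ne_zero_iff.2 ⟨d, mem_support_iff.1 ((mem_support_initialForm w).2 ⟨hd, hmax.symm⟩)⟩

theorem weight_of_mem_support_initialForm_mul
    (hd : d ∈ (initialForm w p * initialForm w q).support) :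
    (weight w d : WithBot M) = weightedTotalDegree' w p + weightedTotalDegree' w q := by
  classical
  obtain ⟨a, ha, b, hb, rfl⟩ := Finset.mem_add.1 (support_mul _ _ hd)
  rw [map_add, WithBot.coe_add, ((mem_support_initialForm w).1 ha).2,
    ((mem_support_initialForm w).1 hb).2]

variable [IsOrderedCancelAddMonoid M]

theorem coeff_mul_eq_coeff_initialForm_mul
    (hd : (weight w d : WithBot M) = weightedTotalDegree' w p + weightedTotalDegree' w q) :
    coeff d (p * q) = coeff d (initialForm w p * initialForm w q) := by
  classical
  rw [coeff_mul, coeff_mul]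
  refine Finset.sum_congr rfl fun ⟨a, b⟩ hab => ?_
  by_cases ha : a ∈ p.support
  · by_cases hb : b ∈ q.support
    · -- the weights of `a` and `b` are at most the maxima and add up to their sum
      have ha' := le_weightedTotalDegree' w ha
      have hb' := le_weightedTotalDegree' w hb
      obtain ⟨A, hA⟩ := WithBot.ne_bot_iff_exists.1 (ne_bot_of_le_ne_bot WithBot.coe_ne_bot ha')
      obtain ⟨B, hB⟩ := WithBot.ne_bot_iff_exists.1 (ne_bot_of_le_ne_bot WithBot.coe_ne_bot hb')
      rw [← Finset.HasAntidiagonal.mem_antidiagonal.1 hab, map_add, ← hA, ← hB] at hd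
      rw [← hA] at ha'
      rw [← hB] at hb'
      norm_cast at hd ha' hb'
      obtain ⟨rfl, rfl⟩ := (add_eq_add_iff_eq_and_eq ha' hb').1 hd
      rw [coeff_initialForm, coeff_initialForm, if_pos hA, if_pos hB]
    · simp [notMem_support_iff.1 hb, coeff_initialForm]
  · simp [notMem_support_iff.1 ha, coeff_initialForm]

theorem weightedTotalDegree'_mul [NoZeroDivisors R] (p q : MvPolynomial σ R) :
    weightedTotalDegree' w (p * q) = weightedTotalDegree' w p + weightedTotalDegree' w q := by
  classical
  rcases eq_or_ne p 0 with rfl | hp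
  · simp [weightedTotalDegree'_zero]
  rcases eq_or_ne q 0 with rfl | hq
  · simp [weightedTotalDegree'_zero]
  refine le_antisymm (Finset.sup_le fun d hd => ?_) ?_
  · obtain ⟨a, ha, b, hb, rfl⟩ := Finset.mem_add.1 (support_mul _ _ hd)
    rw [map_add, WithBot.coe_add]
    exact add_le_add (le_weightedTotalDegree' w ha) (le_weightedTotalDegree' w hb)
  · obtain ⟨d, hd⟩ := support_nonempty.2
      (mul_ne_zero (initialForm_ne_zero w hp) (initialForm_ne_zero w hq))
    have hweight := weight_of_mem_support_initialForm_mul w hd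
    rw [← hweight]
    refine le_weightedTotalDegree' w (mem_support_iff.2 ?_)
    rw [coeff_mul_eq_coeff_initialForm_mul w hweight]
    exact mem_support_iff.1 hd

theorem initialForm_mul [NoZeroDivisors R] (p q : MvPolynomial σ R) :
    initialForm w (p * q) = initialForm w p * initialForm w q := by
  ext d
  rw [coeff_initialForm, weightedTotalDegree'_mul]
  split_ifs with hd
  · exact coeff_mul_eq_coeff_initialForm_mul w hd
  · by_contra hne
    exact hd (weight_of_mem_support_initialForm_mul w (mem_support_iff.2 (Ne.symm hne)))

theorem IsWeightedHomogeneous.exists_max_weight_add_max_weight_eq [NoZeroDivisors R] {m : M}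
    (h : IsWeightedHomogeneous w (p * q) m) (hp : p ≠ 0) (hq : q ≠ 0) :
    ∃ a ∈ p.support, ∃ b ∈ q.support, (∀ d ∈ p.support, weight w d ≤ weight w a) ∧
      (∀ d ∈ q.support, weight w d ≤ weight w b) ∧ weight w a + weight w b = m := by
  obtain ⟨a, ha, hpa⟩ := exists_mem_support_weightedTotalDegree'_eq w hp
  obtain ⟨b, hb, hqb⟩ := exists_mem_support_weightedTotalDegree'_eq w hq
  have hm := (h.weighted_total_degree (mul_ne_zero hp hq)).symm.trans
    (weightedTotalDegree'_mul w p q)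
  rw [hpa, hqb] at hm
  exact ⟨a, ha, b, hb, fun d hd => WithBot.coe_le_coe.1 (hpa ▸ le_weightedTotalDegree' w hd),
    fun d hd => WithBot.coe_le_coe.1 (hqb ▸ le_weightedTotalDegree' w hd),
    by exact_mod_cast hm.symm⟩

theorem IsWeightedHomogeneous.of_mul_left [NoZeroDivisors R] {m : M}
    (h : IsWeightedHomogeneous w (p * q) m) (hq : q ≠ 0) : ∃ n, IsWeightedHomogeneous w p n := by
  rcases eq_or_ne p 0 with rfl | hp
  · exact ⟨0, isWeightedHomogeneous_zero _ _ _⟩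
  obtain ⟨a, ha, b, hb, hpa, hqb, hab⟩ := h.exists_max_weight_add_max_weight_eq w hp hq
  -- minimal weights are the maximal ones for the order dual
  have hdual : IsWeightedHomogeneous (OrderDual.toDual ∘ w) (p * q) (OrderDual.toDual m) := h
  obtain ⟨a', -, b', -, hpa', hqb', hab'⟩ := hdual.exists_max_weight_add_max_weight_eq _ hp hq
  have haa' : weight w a' = weight w a :=
    ((add_eq_add_iff_eq_and_eq (hpa' a ha) (hqb' b hb)).1 (hab.trans hab'.symm)).1.symm
  exact ⟨weight w a, fun d hd =>
    le_antisymm (hpa d (mem_support_iff.2 hd)) (haa' ▸ hpa' d (mem_support_iff.2 hd))⟩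

theorem IsWeightedHomogeneous.of_mul_right [NoZeroDivisors R] {m : M}
    (h : IsWeightedHomogeneous w (p * q) m) (hp : p ≠ 0) : ∃ n, IsWeightedHomogeneous w q n :=
  (mul_comm p q ▸ h).of_mul_left w hp

end InitialForm

end MvPolynomial

section Field

variable {𝕜 E : Type*} [Field 𝕜] [AddCommGroup E] [Module 𝕜 E]

theorem sub_mem_span_singleton_of_forall_dual {d a b : E}
    (h : ∀ L : E →ₗ[𝕜] 𝕜, L d = 0 → L a = L b) : a - b ∈ 𝕜 ∙ d := by
  by_contra hab
  obtain ⟨L, hL, hker⟩ := Submodule.exists_le_ker_of_notMem hab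
  exact hL (by rw [map_sub, h L (hker (Submodule.mem_span_singleton_self d)), sub_self])

variable [LinearOrder 𝕜] [IsStrictOrderedRing 𝕜]

theorem IsExtreme.convexHull_sdiff_subset {S F : Set E} (hF : IsExtreme 𝕜 (convexHull 𝕜 S) F) :
    convexHull 𝕜 (S \ F) ⊆ convexHull 𝕜 S \ F :=
  convexHull_min (fun _ hs => ⟨subset_convexHull 𝕜 S hs.1, hs.2⟩)
    (IsExtreme.convex_sdiff (convex_convexHull 𝕜 S) hF)

theorem IsExtreme.eq_convexHull_inter {S F : Set E} (hF : IsExtreme 𝕜 (convexHull 𝕜 S) F)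
    (hFc : Convex 𝕜 F) : F = convexHull 𝕜 (S ∩ F) := by
  refine Subset.antisymm (fun z hz => ?_) (convexHull_min inter_subset_right hFc)
  have hout := hF.convexHull_sdiff_subset
  rcases (S ∩ F).eq_empty_or_nonempty with hin | hin
  · refine absurd hz (hout ?_).2
    rw [sdiff_eq_left.2 (disjoint_iff_inter_eq_empty.2 hin)]
    exact hF.subset hz
  rcases (S \ F).eq_empty_or_nonempty with hdiff | hdiff
  · rw [inter_eq_self_of_subset_left (sdiff_eq_empty.1 hdiff)]
    exact hF.subset hz
  have hzS := hF.subset hz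
  rw [← inter_union_sdiff S F, convexHull_union hin hdiff] at hzS
  obtain ⟨a, ha, b, hb, hzab⟩ := mem_convexJoin.1 hzS
  have hbF : b ∉ F := (hout hb).2
  rw [← insert_endpoints_openSegment] at hzab
  rcases hzab with rfl | rfl | hzab
  · exact ha
  · exact absurd hz hbF
  · exact absurd (hF.right_mem_of_mem_openSegment (convexHull_mono inter_subset_left ha)
      (hout hb).1 hz hzab) hbF

theorem IsExtreme.lineMap_mem_segment_of_mem {A : Set E} {x y : E}
    (h : IsExtreme 𝕜 A (segment 𝕜 x y)) {t : 𝕜} (ht : lineMap x y t ∈ A) :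
    lineMap x y t ∈ segment 𝕜 x y := by
  -- beyond an endpoint, that endpoint lies strictly between `lineMap x y t` and the other one
  have beyond : ∀ {x y : E}, IsExtreme 𝕜 A (segment 𝕜 x y) → ∀ {t : 𝕜}, 1 < t →
      lineMap x y t ∈ A → lineMap x y t ∈ segment 𝕜 x y := by
    intro x y h t ht hA
    have hy : y ∈ openSegment 𝕜 x (lineMap x y t) := by
      rw [openSegment_eq_image_lineMap]
      refine ⟨t⁻¹, ⟨inv_pos.2 (zero_lt_one.trans ht), inv_lt_one_of_one_lt₀ ht⟩, ?_⟩
      rw [lineMap_lineMap_right, inv_mul_cancel₀ (zero_lt_one.trans ht).ne', lineMap_apply_one]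
    exact h.right_mem_of_mem_openSegment (h.subset (left_mem_segment 𝕜 x y)) hA
      (right_mem_segment 𝕜 x y) hy
  rcases lt_or_ge 1 t with h1 | h1
  · exact beyond h h1 ht
  rcases le_or_gt 0 t with h0 | h0
  · exact lineMap_mem_segment 𝕜 x y ⟨h0, h1⟩
  rw [← sub_sub_cancel 1 t, lineMap_apply_one_sub] at ht ⊢
  rw [segment_symm] at h ⊢
  exact beyond h (by linarith) ht

theorem exists_convexHull_eq_segment_of_sub_mem_span {T : Set E} (hT : T.Finite)
    (hne : T.Nonempty) {d : E} (hd : ∀ a ∈ T, ∀ b ∈ T, a - b ∈ 𝕜 ∙ d) :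
    ∃ u ∈ T, ∃ v ∈ T, convexHull 𝕜 T = segment 𝕜 u v := by
  obtain ⟨t, ht⟩ := hne
  rcases eq_or_ne d 0 with rfl | hd0
  · refine ⟨t, ht, t, ht, ?_⟩
    have hTt : T = {t} := eq_singleton_iff_unique_mem.2 ⟨ht, fun a ha => by
      simpa [sub_eq_zero] using hd a ha t ht⟩
    rw [hTt, convexHull_singleton, segment_same]
  obtain ⟨L₀, hL₀, -⟩ := Submodule.exists_le_ker_of_notMem
    (show d ∉ (⊥ : Submodule 𝕜 E) from hd0)
  set L := (L₀ d)⁻¹ • L₀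
  have hLd : L d = 1 := by simp [L, hL₀]
  have hdiff : ∀ a ∈ T, ∀ b ∈ T, a - b = (L a - L b) • d := fun a ha b hb => by
    obtain ⟨c, hc⟩ := Submodule.mem_span_singleton.1 (hd a ha b hb)
    rw [← hc, ← map_sub, ← hc, map_smul, hLd, smul_eq_mul, mul_one]
  obtain ⟨u, hu, hmin⟩ := T.exists_min_image L hT ⟨t, ht⟩
  obtain ⟨v, hv, hmax⟩ := T.exists_max_image L hT ⟨t, ht⟩
  refine ⟨u, hu, v, hv, Subset.antisymm (convexHull_min (fun a ha => ?_) (convex_segment u v))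
    (segment_subset_convexHull hu hv)⟩
  rcases eq_or_lt_of_le ((hmin a ha).trans (hmax a ha)) with huv | huv
  · have hau : a = u := by
      rw [← sub_eq_zero, hdiff a ha u hu, le_antisymm ((hmax a ha).trans huv.ge) (hmin a ha),
        sub_self, zero_smul]
    exact hau ▸ left_mem_segment 𝕜 u v
  rw [segment_eq_image_lineMap]
  refine ⟨(L a - L u) / (L v - L u), ⟨div_nonneg (sub_nonneg.2 (hmin a ha)) (sub_nonneg.2 huv.le),
    div_le_one_of_le₀ (sub_le_sub_right (hmax a ha) _) (sub_nonneg.2 huv.le)⟩, ?_⟩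
  rw [lineMap_apply_module', hdiff v hv u hu, smul_smul,
    div_mul_cancel₀ _ (sub_ne_zero.2 huv.ne'), ← hdiff a ha u hu, sub_add_cancel]

end Field

section NormedSpace

variable {E : Type*} [NormedAddCommGroup E] [NormedSpace ℝ E]

theorem IsExtreme.exists_forall_lt_of_segment {S : Set E} (hS : S.Finite) {x y : E}
    (h : IsExtreme ℝ (convexHull ℝ S) (segment ℝ x y)) :
    ∃ f : StrongDual ℝ E, f x = f y ∧ ∀ s ∈ S, s ∉ segment ℝ x y → f s < f x := by
  have hdisj : Disjoint (convexHull ℝ (S \ segment ℝ x y)) (line[ℝ, x, y] : Set E) := by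
    refine disjoint_left.2 fun z hzB hzL => ?_
    obtain ⟨t, rfl⟩ := mem_affineSpan_pair_iff_exists_lineMap_eq.1 hzL
    have hout := h.convexHull_sdiff_subset
    exact (hout hzB).2 (h.lineMap_mem_segment_of_mem (hout hzB).1)
  have hclosed : IsClosed (line[ℝ, x, y] : Set E) := by
    rw [← AffineSubspace.isClosed_direction_iff]
    exact Submodule.closed_of_finiteDimensional _
  obtain ⟨f, u, v, hfB, huv, hfL⟩ := geometric_hahn_banach_compact_closed
    (convex_convexHull ℝ _) (hS.sdiff.isCompact_convexHull (𝕜 := ℝ)) (AffineSubspace.convex _)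
    hclosed hdisj
  -- `f` is bounded below on the line through `x` and `y`, hence constant on it
  have hfxy : f x = f y := by
    by_contra hne
    have hval : f (lineMap x y ((v - f x) / (f y - f x))) = v := by
      rw [lineMap_apply_module, map_add, map_smul, map_smul, smul_eq_mul, smul_eq_mul]
      field_simp [sub_ne_zero.2 (Ne.symm hne)]
      ring
    exact (hfL _ (AffineMap.lineMap_mem_affineSpan_pair _ _ _)).ne' hval
  refine ⟨f, hfxy, fun s hs hseg => ?_⟩
  have := hfL x (left_mem_affineSpan_pair ℝ x y)
  have := hfB s (subset_convexHull ℝ _ ⟨hs, hseg⟩)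
  linarith

theorem IsExtreme.isExposed_segment {S : Set E} (hS : S.Finite) {x y : E}
    (h : IsExtreme ℝ (convexHull ℝ S) (segment ℝ x y)) :
    IsExposed ℝ (convexHull ℝ S) (segment ℝ x y) := by
  obtain ⟨f, hfxy, hlt⟩ := h.exists_forall_lt_of_segment hS
  have hseg : segment ℝ x y ⊆ {z | f z = f x} :=
    (convex_hyperplane f.toLinearMap.isLinear _).segment_subset rfl hfxy.symm
  have hle : convexHull ℝ S ⊆ {z | f z ≤ f x} := by
    refine convexHull_min (fun s hs => ?_) (convex_halfSpace_le f.toLinearMap.isLinear _)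
    by_cases hs' : s ∈ segment ℝ x y
    · exact (hseg hs').le
    · exact (hlt s hs hs').le
  refine fun _ => ⟨f, Subset.antisymm (fun z hz => ⟨h.subset hz, fun z' hz' => ?_⟩) ?_⟩
  · exact (hle hz').trans (hseg hz).ge
  have hF : IsExposed ℝ (convexHull ℝ S) (f.toExposed (convexHull ℝ S)) :=
    ContinuousLinearMap.toExposed.isExposed
  change f.toExposed _ ⊆ _
  rw [hF.isExtreme.eq_convexHull_inter (hF.convex (convex_convexHull ℝ S))]
  refine convexHull_min (fun s ⟨hs, hsF⟩ => ?_) (convex_segment x y)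
  by_contra hs'
  exact (hlt s hs hs').not_ge (hsF.2 x (h.subset (left_mem_segment ℝ x y)))

end NormedSpace

section NewtonPolytope

open MvPolynomial

def exponentVector (m : Fin n →₀ ℕ) : Fin n → ℝ := fun i => m i

theorem newtonPolytope_eq [CommSemiring K] (p : MvPolynomial (Fin n) K) :
    newtonPolytope p = convexHull ℝ (exponentVector '' p.support) :=
  rfl

def weightsOf (L : (Fin n → ℝ) →ₗ[ℝ] ℝ) : Fin n → ℝ := fun i => L (Pi.single i 1)

theorem weight_weightsOf (L : (Fin n → ℝ) →ₗ[ℝ] ℝ) (m : Fin n →₀ ℕ) :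
    Finsupp.weight (weightsOf L) m = L (exponentVector m) := by
  rw [Finsupp.weight_eq_sum, show exponentVector m = fun i => (m i : ℝ) from rfl]
  conv_rhs => rw [← Finset.univ_sum_single (fun i => (m i : ℝ))]
  simp only [map_sum, nsmul_eq_mul]
  refine Finset.sum_congr rfl fun i _ => ?_
  rw [weightsOf, ← smul_eq_mul, ← map_smul, ← Pi.single_smul, smul_eq_mul, mul_one]

variable [CommSemiring K]

theorem isWeightedHomogeneous_weightsOf_iff {L : (Fin n → ℝ) →ₗ[ℝ] ℝ}
    {p : MvPolynomial (Fin n) K} {c : ℝ} :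
    IsWeightedHomogeneous (weightsOf L) p c ↔ ∀ z ∈ newtonPolytope p, L z = c := by
  rw [newtonPolytope_eq]
  refine ⟨fun h => convexHull_min ?_ (convex_hyperplane L.isLinear c), fun h d hd => ?_⟩
  · rintro _ ⟨d, hd, rfl⟩
    show L (exponentVector d) = c
    rw [← weight_weightsOf]
    exact h (mem_support_iff.1 hd)
  · rw [weight_weightsOf]
    exact h _ (subset_convexHull ℝ _ ⟨d, mem_support_iff.2 hd, rfl⟩)

theorem newtonPolytope_initialForm (ℓ : StrongDual ℝ (Fin n → ℝ)) (p : MvPolynomial (Fin n) K) :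
    newtonPolytope (initialForm (weightsOf ℓ.toLinearMap) p) = ℓ.toExposed (newtonPolytope p) := by
  have hF : IsExposed ℝ (newtonPolytope p) (ℓ.toExposed (newtonPolytope p)) :=
    ContinuousLinearMap.toExposed.isExposed
  rw [hF.isExtreme.eq_convexHull_inter (hF.convex (convex_convexHull ℝ _)), newtonPolytope_eq]
  congr 1
  have hmax : ∀ d ∈ p.support, (∀ z ∈ newtonPolytope p, ℓ z ≤ ℓ (exponentVector d)) ↔
      ∀ d' ∈ p.support, ℓ (exponentVector d') ≤ ℓ (exponentVector d) := fun d _ =>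
    ⟨fun h d' hd' => h _ (subset_convexHull ℝ _ ⟨d', hd', rfl⟩), fun h =>
      convexHull_min (by rintro _ ⟨d', hd', rfl⟩; exact h d' hd')
        (convex_halfSpace_le ℓ.toLinearMap.isLinear _)⟩
  ext z
  constructor
  · rintro ⟨d, hd, rfl⟩
    obtain ⟨hdp, hdeg⟩ := (mem_support_initialForm _).1 hd
    refine ⟨⟨d, hdp, rfl⟩, subset_convexHull ℝ _ ⟨d, hdp, rfl⟩, (hmax d hdp).2 fun d' hd' => ?_⟩
    have hle := (coe_weight_eq_weightedTotalDegree'_iff _ hdp).1 hdeg d' hd'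
    rw [weight_weightsOf, weight_weightsOf] at hle
    exact hle
  · rintro ⟨⟨d, hdp, rfl⟩, -, hz⟩
    refine ⟨d, (mem_support_initialForm _).2
      ⟨hdp, (coe_weight_eq_weightedTotalDegree'_iff _ hdp).2 fun d' hd' => ?_⟩, rfl⟩
    rw [weight_weightsOf, weight_weightsOf]
    exact (hmax d hdp).1 hz d' hd'

theorem isEdgeOf_of_newtonPolytope_initialForm_eq_segment (ℓ : StrongDual ℝ (Fin n → ℝ))
    {p : MvPolynomial (Fin n) K} {x y : Fin n → ℝ} (hxy : x ≠ y)
    (h : newtonPolytope (initialForm (weightsOf ℓ.toLinearMap) p) = segment ℝ x y) :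
    IsEdgeOf (newtonPolytope p) x y := by
  rw [newtonPolytope_initialForm] at h
  exact ⟨hxy, h ▸ ContinuousLinearMap.toExposed.isExposed.isExtreme⟩

theorem exists_newtonPolytope_eq_parallel_segment {p : MvPolynomial (Fin n) K} {x y : Fin n → ℝ}
    (hhom : ∀ L : (Fin n → ℝ) →ₗ[ℝ] ℝ, L x = L y → ∃ c, IsWeightedHomogeneous (weightsOf L) p c)
    {L₀ : (Fin n → ℝ) →ₗ[ℝ] ℝ} (hL₀ : ¬∃ c, IsWeightedHomogeneous (weightsOf L₀) p c) :
    ∃ x' y', x' ≠ y' ∧ newtonPolytope p = segment ℝ x' y' ∧ ∃ t : ℝ, y' - x' = t • (y - x) := by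
  set T := exponentVector '' (p.support : Set (Fin n →₀ ℕ)) with hT
  have hcol : ∀ a ∈ T, ∀ b ∈ T, a - b ∈ ℝ ∙ (y - x) := by
    intro a ha b hb
    refine sub_mem_span_singleton_of_forall_dual fun L hL => ?_
    obtain ⟨c, hc⟩ := hhom L (by rwa [map_sub, sub_eq_zero, eq_comm] at hL)
    rw [isWeightedHomogeneous_weightsOf_iff] at hc
    rw [hc a (subset_convexHull ℝ _ ha), hc b (subset_convexHull ℝ _ hb)]
  have hne : T.Nonempty := by
    rw [nonempty_iff_ne_empty]
    intro hT0
    exact hL₀ ⟨0, isWeightedHomogeneous_weightsOf_iff.2 (by simp [newtonPolytope_eq, ← hT, hT0])⟩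
  obtain ⟨u, hu, v, hv, hseg⟩ :=
    exists_convexHull_eq_segment_of_sub_mem_span (p.support.finite_toSet.image _) hne hcol
  obtain ⟨t, ht⟩ := Submodule.mem_span_singleton.1 (hcol v hv u hu)
  refine ⟨u, v, fun huv => hL₀ ⟨L₀ u, isWeightedHomogeneous_weightsOf_iff.2 fun z hz => ?_⟩,
    hseg, t, ht.symm⟩
  rw [newtonPolytope_eq, ← hT, hseg, huv, segment_same, mem_singleton_iff] at hz
  rw [hz, huv]

theorem exists_parallel_segment_of_newtonPolytope_mul_eq_segment [NoZeroDivisors K]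
    {G H : MvPolynomial (Fin n) K} {x y : Fin n → ℝ} (hxy : x ≠ y)
    (hGH : newtonPolytope (G * H) = segment ℝ x y) :
    (∃ x' y', x' ≠ y' ∧ newtonPolytope G = segment ℝ x' y' ∧ ∃ t : ℝ, y' - x' = t • (y - x)) ∨
    (∃ x' y', x' ≠ y' ∧ newtonPolytope H = segment ℝ x' y' ∧ ∃ t : ℝ, y' - x' = t • (y - x)) := by
  have hGH0 : G * H ≠ 0 := by
    rintro h0
    have hx := left_mem_segment ℝ x y
    rw [← hGH, h0, newtonPolytope_eq] at hx
    simp at hx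
  have hhom : ∀ L : (Fin n → ℝ) →ₗ[ℝ] ℝ, L x = L y →
      IsWeightedHomogeneous (weightsOf L) (G * H) (L x) := fun L hL =>
    isWeightedHomogeneous_weightsOf_iff.2
      (hGH ▸ (convex_hyperplane L.isLinear _).segment_subset rfl hL.symm)
  obtain ⟨L₀, hL₀, -⟩ := Submodule.exists_le_ker_of_notMem
    (show x - y ∉ (⊥ : Submodule ℝ (Fin n → ℝ)) from sub_ne_zero.2 hxy)
  rw [map_sub, sub_ne_zero] at hL₀
  by_cases hG : ∃ c, IsWeightedHomogeneous (weightsOf L₀) G c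
  · refine .inr (exists_newtonPolytope_eq_parallel_segment
      (fun L hL => (hhom L hL).of_mul_right _ (left_ne_zero_of_mul hGH0)) (L₀ := L₀) ?_)
    rintro ⟨c', hH⟩
    obtain ⟨c, hG⟩ := hG
    have hconst := isWeightedHomogeneous_weightsOf_iff.1 (hG.mul hH)
    rw [hGH] at hconst
    exact hL₀ ((hconst x (left_mem_segment ℝ x y)).trans (hconst y (right_mem_segment ℝ x y)).symm)
  · exact .inl (exists_newtonPolytope_eq_parallel_segment
      (fun L hL => (hhom L hL).of_mul_left _ (right_ne_zero_of_mul hGH0)) hG)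

end NewtonPolytope

/-- If `f = g · h`, then every edge of the Newton polytope of `f` is parallel to an
edge of the Newton polytope of `g` or to an edge of the Newton polytope of `h`. -/
theorem edge_newtonPolytope_mul_parallel [Field K]
    (f g h : MvPolynomial (Fin n) K) (hf : f = g * h)
    (x y : Fin n → ℝ) (hxy : IsEdgeOf (newtonPolytope f) x y) :
    (∃ x' y', IsEdgeOf (newtonPolytope g) x' y' ∧ ∃ t : ℝ, y' - x' = t • (y - x)) ∨
    (∃ x' y', IsEdgeOf (newtonPolytope h) x' y' ∧ ∃ t : ℝ, y' - x' = t • (y - x)) := by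
  obtain ⟨hne, hext⟩ := hxy
  obtain ⟨ℓ, hℓ⟩ := hext.isExposed_segment (f.support.finite_toSet.image _)
    ⟨x, left_mem_segment ℝ x y⟩
  set w := weightsOf ℓ.toLinearMap
  have hface : newtonPolytope (MvPolynomial.initialForm w g * MvPolynomial.initialForm w h) =
      segment ℝ x y := by
    rw [← MvPolynomial.initialForm_mul, ← hf, newtonPolytope_initialForm]
    exact hℓ.symm
  rcases exists_parallel_segment_of_newtonPolytope_mul_eq_segment hne hface with
    ⟨x', y', hne', hseg, hpar⟩ | ⟨x', y', hne', hseg, hpar⟩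
  · exact .inl ⟨x', y', isEdgeOf_of_newtonPolytope_initialForm_eq_segment ℓ hne' hseg, hpar⟩
  · exact .inr ⟨x', y', isEdgeOf_of_newtonPolytope_initialForm_eq_segment ℓ hne' hseg, hpar⟩
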